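/- Let M ∈ rep(C_r) (r ≥ 3) be S_r-stable with dim π_λ(M) = (a, b). Then r divides a or r divides b. -/

import Mathlib

open DirectSum

/-!
# Shared framework

Concrete finite-dimensional representations of the generalized Kronecker quiver `Γ_r`
(`KRep`) and of its universal covering quiver `C_r` (an `r`-regular tree with bipartite
orientation, `CrQuiver`/`CrRep`), together with an abstract layer
(`KroneckerAR`, `CoverAR`) for the Auslander–Reiten-theoretic notions
(AR translate, components, quasi-simplicity, quasi-length, preprojective/preinjective
representations) that are not available in Mathlib.
-/

/-! ## Representations of the generalized Kronecker quiver `Γ_r` -/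

/-- A finite-dimensional representation of the `r`-Kronecker quiver `Γ_r`
(two vertices `1, 2` and `r` arrows `γ_1, …, γ_r : 1 → 2`) over `k`. -/
structure KRep (k : Type) [Field k] (r : ℕ) where
  V1 : Type
  V2 : Type
  [a1 : AddCommGroup V1]
  [a2 : AddCommGroup V2]
  [m1 : Module k V1]
  [m2 : Module k V2]
  [f1 : FiniteDimensional k V1]
  [f2 : FiniteDimensional k V2]
  map : Fin r → V1 →ₗ[k] V2

attribute [instance] KRep.a1 KRep.a2 KRep.m1 KRep.m2 KRep.f1 KRep.f2

namespace KRep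

variable {k : Type} [Field k] {r : ℕ}

/-- Morphisms of representations of `Γ_r`. -/
structure Hom (M N : KRep k r) where
  f1 : M.V1 →ₗ[k] N.V1
  f2 : M.V2 →ₗ[k] N.V2
  comm : ∀ i, (N.map i).comp f1 = f2.comp (M.map i)

/-- Isomorphisms of representations of `Γ_r`. -/
structure Iso (M N : KRep k r) where
  e1 : M.V1 ≃ₗ[k] N.V1
  e2 : M.V2 ≃ₗ[k] N.V2
  comm : ∀ i, (N.map i).comp (e1 : M.V1 →ₗ[k] N.V1) = (e2 : M.V2 →ₗ[k] N.V2).comp (M.map i)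

/-- `M` is indecomposable: it is nonzero and its endomorphism ring has no nontrivial
idempotents. -/
def Indec (M : KRep k r) : Prop :=
  ((∃ v : M.V1, v ≠ 0) ∨ (∃ v : M.V2, v ≠ 0)) ∧
  ∀ f : Hom M M, f.f1.comp f.f1 = f.f1 → f.f2.comp f.f2 = f.f2 →
    (f.f1 = 0 ∧ f.f2 = 0) ∨ (f.f1 = LinearMap.id ∧ f.f2 = LinearMap.id)

/-- `rad(M, N) ≠ 0`: there is a nonzero non-invertible homomorphism `M → N`. -/
def radNe (M N : KRep k r) : Prop :=
  ∃ f : Hom M N, (f.f1 ≠ 0 ∨ f.f2 ≠ 0) ∧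
    ¬ (Function.Bijective f.f1 ∧ Function.Bijective f.f2)

/-- The equal kernels property: `M^α = Σ α_i M(γ_i)` is injective for all `α ≠ 0`. -/
def EKP (M : KRep k r) : Prop :=
  ∀ α : Fin r → k, α ≠ 0 → Function.Injective ⇑(∑ i, α i • M.map i)

/-- The equal images property: `M^α = Σ α_i M(γ_i)` is surjective for all `α ≠ 0`. -/
def EIP (M : KRep k r) : Prop :=
  ∀ α : Fin r → k, α ≠ 0 → Function.Surjective ⇑(∑ i, α i • M.map i)

/-- The dimension vector `(dim_k M_1, dim_k M_2)`. -/
noncomputable def dimVec (M : KRep k r) : ℕ × ℕ := (Module.finrank k M.V1, Module.finrank k M.V2)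

/-- The standard duality `D` on `rep(Γ_r)`:
`(DM)_1 = (M_2)^*`, `(DM)_2 = (M_1)^*`, `(DM)(γ_i) = M(γ_i)^*`. -/
noncomputable def dual (M : KRep k r) : KRep k r where
  V1 := Module.Dual k M.V2
  V2 := Module.Dual k M.V1
  map i := (M.map i).dualMap

/-- The action of an `r × r`-matrix `A` on a representation, corresponding to the pullback
along the algebra homomorphism `φ_A` with `φ_A(γ_j) = Σ_i a_{ij} γ_i`. -/
def glAct (M : KRep k r) (A : Matrix (Fin r) (Fin r) k) : KRep k r where
  V1 := M.V1
  V2 := M.V2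
  map j := ∑ i, A i j • M.map i

/-- `M` is `GL_r(k)`-stable: `A.M ≅ M` for every `A ∈ GL_r(k)`, where `A.M` is the pullback
of `M` along `φ_{A⁻¹}`. -/
def GLStable (M : KRep k r) : Prop :=
  ∀ A : GL (Fin r) k,
    Nonempty (Iso (M.glAct ((A⁻¹ : GL (Fin r) k) : Matrix (Fin r) (Fin r) k)) M)

end KRep

/-! ## Abstract Auslander–Reiten data for `rep(Γ_r)` -/

/-- Abstract Auslander–Reiten-theoretic data for the generalized Kronecker algebra
`K_r = kΓ_r`: the AR translate `τ` (a bijection on regular indecomposables, here recorded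
as a permutation of all representations), the classes of preprojective and preinjective
representations, the relation of lying in the same AR component, and quasi-simplicity. -/
structure KroneckerAR (k : Type) [Field k] (r : ℕ) where
  /-- The Auslander–Reiten translate `τ`. -/
  tau : Equiv.Perm (KRep k r)
  /-- `M` lies in the preprojective component `𝒫`. -/
  Preproj : KRep k r → Prop
  /-- `M` lies in one of the preinjective component `ℐ`. -/
  Preinj : KRep k r → Prop
  /-- `M`, `N` lie in the same component of the AR quiver. -/
  sameComp : KRep k r → KRep k r → Prop
  sameComp_equiv : Equivalence sameComp
  sameComp_tau : ∀ M, sameComp M (tau M)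
  /-- `M` is quasi-simple (lies in the bottom layer of a `ℤA∞` component). -/
  quasiSimple : KRep k r → Prop

namespace KroneckerAR

variable {k : Type} [Field k] {r : ℕ}

/-- `M` is regular: neither preprojective nor preinjective. -/
def Regular (S : KroneckerAR k r) (M : KRep k r) : Prop := ¬ S.Preproj M ∧ ¬ S.Preinj M

/-- The regular component containing `X` has width `W(𝒞) = w`: there are quasi-simple
representations `M_𝒞` and `W_𝒞` in the component of `X` such that the `τ⁻¹`-orbit of `M_𝒞`
consists of `EKP`-representations, `τ M_𝒞 ∉ EKP` (so the cone `(M_𝒞 →)` is `EKP ∩ 𝒞`),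
dually the `τ`-orbit of `W_𝒞` consists of `EIP`-representations with `τ⁻¹ W_𝒞 ∉ EIP`
(so `(→ W_𝒞) = EIP ∩ 𝒞`), and `τ^{w+1} M_𝒞 = W_𝒞`. -/
def IsWidth (S : KroneckerAR k r) (X : KRep k r) (w : ℕ) : Prop :=
  ∃ MC WC : KRep k r, S.quasiSimple MC ∧ S.quasiSimple WC ∧
    S.sameComp X MC ∧ S.sameComp X WC ∧
    (∀ j : ℕ, ((S.tau⁻¹ ^ j) MC).EKP) ∧ ¬ (S.tau MC).EKP ∧
    (∀ j : ℕ, ((S.tau ^ j) WC).EIP) ∧ ¬ (S.tau⁻¹ WC).EIP ∧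
    (S.tau ^ (w + 1)) MC = WC

end KroneckerAR
/-! ## The universal covering quiver `C_r` -/

/-- The combinatorial data of a quiver whose underlying graph is `r`-regular and which has
bipartite orientation: a set `Src` of sources, a set `Snk` of sinks, and for each source
(resp. sink) exactly one incident arrow with label (`π`-image) `γ_i` for every `i`;
`step x i` is the target of the arrow labelled `i` starting at `x`, and `back y i` is the
source of the arrow labelled `i` ending at `y`. -/
structure BipData (r : ℕ) where
  Src : Type
  Snk : Type
  step : Src → Fin r → Snk
  back : Snk → Fin r → Src
  step_back : ∀ y i, step (back y i) i = y
  back_step : ∀ x i, back (step x i) i = x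
  step_inj : ∀ x, Function.Injective (step x)
  back_inj : ∀ y, Function.Injective (back y)

/-- The underlying (simple) graph of the quiver. -/
def BipData.graph {r : ℕ} (Q : BipData r) : SimpleGraph (Q.Src ⊕ Q.Snk) where
  Adj a b := (∃ x i, a = Sum.inl x ∧ b = Sum.inr (Q.step x i)) ∨
             (∃ x i, b = Sum.inl x ∧ a = Sum.inr (Q.step x i))
  symm := by
    refine ⟨?_⟩
    rintro a b (⟨x, i, h1, h2⟩ | ⟨x, i, h1, h2⟩)
    · exact Or.inr ⟨x, i, h1, h2⟩
    · exact Or.inl ⟨x, i, h1, h2⟩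
  loopless := by
    refine ⟨?_⟩
    rintro a (⟨x, i, h1, h2⟩ | ⟨x, i, h1, h2⟩) <;> (subst h1; simp at h2)

/-- The universal covering quiver `C_r` of `Γ_r`: an `r`-regular tree with bipartite
orientation. -/
structure CrQuiver (r : ℕ) extends BipData r where
  isTree : toBipData.graph.IsTree

/-! ## Representations of `C_r` -/

/-- A finite-dimensional representation of `C_r` over `k` (finitely supported). -/
structure CrRep (k : Type) [Field k] {r : ℕ} (Q : CrQuiver r) where
  Vs : Q.Src → Type
  Vt : Q.Snk → Type
  [acs : ∀ x, AddCommGroup (Vs x)]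
  [mds : ∀ x, Module k (Vs x)]
  [act : ∀ y, AddCommGroup (Vt y)]
  [mdt : ∀ y, Module k (Vt y)]
  [fds : ∀ x, FiniteDimensional k (Vs x)]
  [fdt : ∀ y, FiniteDimensional k (Vt y)]
  map : ∀ (x : Q.Src) (i : Fin r), Vs x →ₗ[k] Vt (Q.step x i)
  finSupp : {z : Q.Src ⊕ Q.Snk |
      Sum.elim (fun x => ∃ v : Vs x, v ≠ 0) (fun y => ∃ v : Vt y, v ≠ 0) z}.Finite

attribute [instance] CrRep.acs CrRep.mds CrRep.act CrRep.mdt CrRep.fds CrRep.fdt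

namespace CrRep

variable {k : Type} [Field k] {r : ℕ} {Q : CrQuiver r}

/-- The support of `M`. -/
def suppSet (M : CrRep k Q) : Set (Q.Src ⊕ Q.Snk) :=
  {z | Sum.elim (fun x => ∃ v : M.Vs x, v ≠ 0) (fun y => ∃ v : M.Vt y, v ≠ 0) z}

/-- `z` belongs to `T(M)`, the minimal subtree of `C_r` containing the support of `M`:
it lies on a path between two support vertices. -/
def inTree (M : CrRep k Q) (z : Q.Src ⊕ Q.Snk) : Prop :=
  ∃ a ∈ M.suppSet, ∃ b ∈ M.suppSet, ∃ p : Q.toBipData.graph.Walk a b,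
    p.IsPath ∧ z ∈ p.support

/-- `z` is a leaf of `M`: a vertex of `T(M)` with at most one neighbour in `T(M)`. -/
def IsLeaf (M : CrRep k Q) (z : Q.Src ⊕ Q.Snk) : Prop :=
  M.inTree z ∧ {w | Q.toBipData.graph.Adj z w ∧ M.inTree w}.Subsingleton

/-- The dimension of `M` at a vertex. -/
noncomputable def dimAt (M : CrRep k Q) (z : Q.Src ⊕ Q.Snk) : ℕ :=
  Sum.elim (fun x => Module.finrank k (M.Vs x)) (fun y => Module.finrank k (M.Vt y)) z

/-- All structure maps of `M` are injective (the class `Inj`). -/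
def AllInj (M : CrRep k Q) : Prop := ∀ x i, Function.Injective ⇑(M.map x i)

/-- All structure maps of `M` are surjective (the class `Sur`). -/
def AllSur (M : CrRep k Q) : Prop := ∀ x i, Function.Surjective ⇑(M.map x i)

end CrRep

/-- Morphisms of representations of `C_r`. -/
structure CrHom {k : Type} [Field k] {r : ℕ} {Q : CrQuiver r} (M N : CrRep k Q) where
  fs : ∀ x, M.Vs x →ₗ[k] N.Vs x
  ft : ∀ y, M.Vt y →ₗ[k] N.Vt y
  comm : ∀ x i, (ft (Q.step x i)).comp (M.map x i) = (N.map x i).comp (fs x)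

/-- A morphism is zero if all its components vanish. -/
def CrHom.IsZero {k : Type} [Field k] {r : ℕ} {Q : CrQuiver r} {M N : CrRep k Q}
    (f : CrHom M N) : Prop :=
  (∀ x, f.fs x = 0) ∧ (∀ y, f.ft y = 0)

/-- Isomorphisms of representations of `C_r`. -/
structure CrIso {k : Type} [Field k] {r : ℕ} {Q : CrQuiver r} (M N : CrRep k Q) where
  es : ∀ x, M.Vs x ≃ₗ[k] N.Vs x
  et : ∀ y, M.Vt y ≃ₗ[k] N.Vt y
  comm : ∀ x i, ((et (Q.step x i) : M.Vt (Q.step x i) →ₗ[k] N.Vt (Q.step x i))).comp (M.map x i)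
      = (N.map x i).comp (es x : M.Vs x →ₗ[k] N.Vs x)

namespace CrRep

variable {k : Type} [Field k] {r : ℕ} {Q : CrQuiver r}

/-- `M` is indecomposable: it is nonzero and its endomorphism ring has no nontrivial
idempotents. -/
def Indec (M : CrRep k Q) : Prop :=
  M.suppSet.Nonempty ∧
  ∀ f : CrHom M M, (∀ x, (f.fs x).comp (f.fs x) = f.fs x) →
    (∀ y, (f.ft y).comp (f.ft y) = f.ft y) →
    f.IsZero ∨ ((∀ x, f.fs x = LinearMap.id) ∧ (∀ y, f.ft y = LinearMap.id))

/-- `M` is balanced: indecomposable with a leaf in `C_r^+` (sources) and a leaf in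
`C_r^-` (sinks). -/
def Balanced (M : CrRep k Q) : Prop :=
  M.Indec ∧ (∃ x : Q.Src, M.IsLeaf (Sum.inl x)) ∧ (∃ y : Q.Snk, M.IsLeaf (Sum.inr y))

end CrRep
/-! ## The push-down functor `π_λ : rep(C_r) → rep(Γ_r)` -/

theorem finiteDimensional_directSum {k : Type} [Field k] {ι : Type} (V : ι → Type)
    [∀ i, AddCommGroup (V i)] [∀ i, Module k (V i)] [∀ i, FiniteDimensional k (V i)]
    (h : {i : ι | ∃ v : V i, v ≠ 0}.Finite) : FiniteDimensional k (⨁ i, V i) := by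
  classical
  set s : Finset ι := h.toFinset with hs
  let g : (⨁ i : {j // j ∈ s}, V i.1) →ₗ[k] ⨁ i, V i :=
    DirectSum.toModule k {j // j ∈ s} (⨁ i, V i) fun i => DirectSum.lof k ι V i.1
  have hfd : FiniteDimensional k (⨁ i : {j // j ∈ s}, V i.1) := by
    have e := DirectSum.linearEquivFunOnFintype k {j // j ∈ s} (fun i : {j // j ∈ s} => V i.1)
    exact Module.Finite.equiv e.symm
  have hsurj : Function.Surjective g := by
    intro m
    induction m using DirectSum.induction_on with
    | zero => exact ⟨0, map_zero g⟩
    | of i x =>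
      by_cases hi : i ∈ s
      · refine ⟨DirectSum.lof k {j // j ∈ s} (fun j : {j // j ∈ s} => V j.1) ⟨i, hi⟩ x, ?_⟩
        simp only [g, DirectSum.toModule_lof]
        rw [DirectSum.lof_eq_of]
      · have hx : x = 0 := by
          by_contra hx
          exact hi (by simpa [hs] using ⟨x, hx⟩)
        exact ⟨0, by simp [hx]⟩
    | add a b ha hb =>
      obtain ⟨a', ha'⟩ := ha
      obtain ⟨b', hb'⟩ := hb
      exact ⟨a' + b', by simp [ha', hb']⟩
  exact Module.Finite.of_surjective g hsurj

namespace CrRep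

variable {k : Type} [Field k] {r : ℕ} {Q : CrQuiver r}

/-- The structure map `π_λ(M)(γ_i) = ⊕_{π(β) = γ_i} M(β)` of the push-down. -/
noncomputable def pushMap (M : CrRep k Q) (i : Fin r) :
    (⨁ x, M.Vs x) →ₗ[k] (⨁ y, M.Vt y) := by
  classical
  exact DirectSum.toModule k Q.Src (⨁ y, M.Vt y) fun x =>
    (DirectSum.lof k Q.Snk (fun y => M.Vt y) (Q.step x i)).comp (M.map x i)

/-- The push-down `π_λ(M)` of a representation of `C_r` along the Galois covering
`π : C_r → Γ_r`. -/
noncomputable def pushdown (M : CrRep k Q) : KRep k r where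
  V1 := ⨁ x, M.Vs x
  V2 := ⨁ y, M.Vt y
  f1 := finiteDimensional_directSum (fun x => M.Vs x)
    (M.finSupp.preimage (Set.injOn_of_injective Sum.inl_injective))
  f2 := finiteDimensional_directSum (fun y => M.Vt y)
    (M.finSupp.preimage (Set.injOn_of_injective Sum.inr_injective))
  map := M.pushMap

end CrRep
/-! ## Automorphisms of `C_r` and the actions of `G = π(Γ_r)` and of `S_r` -/

/-- A quiver automorphism of `C_r` lying over the permutation `σ` of the arrow labels
`γ_1, …, γ_r` of `Γ_r`.  For `σ = 1` these are exactly the deck transformations, i.e.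
the elements of the Galois group `G = π(Γ_r)`. -/
structure CrPermAut {r : ℕ} (Q : CrQuiver r) (σ : Equiv.Perm (Fin r)) where
  es : Q.Src ≃ Q.Src
  et : Q.Snk ≃ Q.Snk
  comm : ∀ x i, Q.step (es x) (σ i) = et (Q.step x i)

/-- An element of the Galois group `G = π(Γ_r)`, acting on `C_r` as a label-preserving
quiver automorphism. -/
abbrev CrAut {r : ℕ} (Q : CrQuiver r) := CrPermAut Q (1 : Equiv.Perm (Fin r))

/-- The induced permutation of the vertex set. -/
def CrPermAut.onV {r : ℕ} {Q : CrQuiver r} {σ : Equiv.Perm (Fin r)} (φ : CrPermAut Q σ) :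
    (Q.Src ⊕ Q.Snk) ≃ (Q.Src ⊕ Q.Snk) :=
  Equiv.sumCongr φ.es φ.et

namespace CrRep

variable {k : Type} [Field k] {r : ℕ} {Q : CrQuiver r}

/-- The twist `σ(M)^g` of a representation by an automorphism `φ` of `C_r` lying over
`σ`:  `(M^φ)_x = M_{φ(x)}` and `(M^φ)(α) = M(φ(α))`.  For `σ = 1` this is the shift
`M ↦ M^g` by an element `g` of the Galois group `G`. -/
noncomputable def twist (M : CrRep k Q) {σ : Equiv.Perm (Fin r)} (φ : CrPermAut Q σ) :
    CrRep k Q where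
  Vs x := M.Vs (φ.es x)
  Vt y := M.Vt (φ.et y)
  acs := fun x => inferInstance
  mds := fun x => inferInstance
  act := fun y => inferInstance
  mdt := fun y => inferInstance
  fds := fun x => inferInstance
  fdt := fun y => inferInstance
  map x i := by
    show M.Vs (φ.es x) →ₗ[k] M.Vt (φ.et (Q.step x i))
    rw [← φ.comm x i]
    exact M.map (φ.es x) (σ i)
  finSupp := by
    have h := M.finSupp.preimage (Set.injOn_of_injective φ.onV.injective)
    convert h using 1
    ext z
    cases z <;> rfl

/-- The shift `M ↦ M^g` of a representation by an element of the Galois group. -/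
noncomputable def shift (M : CrRep k Q) (g : CrAut Q) : CrRep k Q := M.twist g

end CrRep
/-! ## Leaf-connected pairs and the extension `N ∗_f M` -/

/-- `(N, M)` is leaf-connected with connecting arrow `α : x0 → Q.step x0 i0`:
`x0` is a leaf of `M`, the target of `α` is a leaf of `N` and the supports are disjoint. -/
def LeafConnected {k : Type} [Field k] {r : ℕ} {Q : CrQuiver r} (N M : CrRep k Q)
    (x0 : Q.Src) (i0 : Fin r) : Prop :=
  M.IsLeaf (Sum.inl x0) ∧ N.IsLeaf (Sum.inr (Q.step x0 i0)) ∧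
  M.suppSet ∩ N.suppSet = ∅

namespace CrRep

variable {k : Type} [Field k] {r : ℕ} {Q : CrQuiver r}

/-- The auxiliary "correction" map used to define `N ∗_f M`: it equals
`(m, n) ↦ (0, f m)` along the connecting arrow and `0` along every other arrow. -/
noncomputable def starCorr (N M : CrRep k Q) (x0 : Q.Src) (i0 : Fin r)
    (f : M.Vs x0 →ₗ[k] N.Vt (Q.step x0 i0)) (x : Q.Src) (i : Fin r) :
    (M.Vs x × N.Vs x) →ₗ[k] (M.Vt (Q.step x i) × N.Vt (Q.step x i)) := by
  classical
  by_cases h : x = x0 ∧ i = i0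
  · obtain ⟨h1, h2⟩ := h
    subst h1; subst h2
    exact (LinearMap.inr k (M.Vt (Q.step x i)) (N.Vt (Q.step x i))).comp
      (f.comp (LinearMap.fst k (M.Vs x) (N.Vs x)))
  · exact 0

/-- The extension `N ∗_f M` of `M` by `N` along a connecting map `f`:
it restricts to `M` on `supp M`, to `N` on `supp N`, and has the map `f` along the
connecting arrow. -/
noncomputable def star (N M : CrRep k Q) (x0 : Q.Src) (i0 : Fin r)
    (f : M.Vs x0 →ₗ[k] N.Vt (Q.step x0 i0)) : CrRep k Q where
  Vs x := M.Vs x × N.Vs x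
  Vt y := M.Vt y × N.Vt y
  acs := fun x => inferInstance
  mds := fun x => inferInstance
  act := fun y => inferInstance
  mdt := fun y => inferInstance
  fds := fun x => inferInstance
  fdt := fun y => inferInstance
  map x i := (M.map x i).prodMap (N.map x i) + starCorr N M x0 i0 f x i
  finSupp := by
    refine (M.finSupp.union N.finSupp).subset ?_
    rintro (x | y) hz
    · obtain ⟨v, hv⟩ := hz
      by_cases h1 : v.1 = 0
      · have h2 : v.2 ≠ 0 := fun h2 => hv (Prod.ext h1 h2)
        exact Or.inr ⟨v.2, h2⟩
      · exact Or.inl ⟨v.1, h1⟩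
    · obtain ⟨v, hv⟩ := hz
      by_cases h1 : v.1 = 0
      · have h2 : v.2 ≠ 0 := fun h2 => hv (Prod.ext h1 h2)
        exact Or.inr ⟨v.2, h2⟩
      · exact Or.inl ⟨v.1, h1⟩

end CrRep

/-! ## Small trees, and the representations `X^i` -/

namespace CrRep

variable {k : Type} [Field k] {r : ℕ} {Q : CrQuiver r}

/-- The tree `T(L)` of `L` is small: it has leaves among the sources and among the sinks,
every vertex has at most `3` neighbours in the tree, and two distinct vertices with
exactly `3` neighbours in the tree have distance at least `3`. -/
def SmallTree (L : CrRep k Q) : Prop :=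
  (∃ x : Q.Src, L.IsLeaf (Sum.inl x)) ∧ (∃ y : Q.Snk, L.IsLeaf (Sum.inr y)) ∧
  (∀ z, L.inTree z → {w | Q.toBipData.graph.Adj z w ∧ L.inTree w}.ncard ≤ 3) ∧
  (∀ z w, L.inTree z → L.inTree w →
    {u | Q.toBipData.graph.Adj z u ∧ L.inTree u}.ncard = 3 →
    {u | Q.toBipData.graph.Adj w u ∧ L.inTree u}.ncard = 3 →
    z = w ∨ 3 ≤ Q.toBipData.graph.dist z w)

/-- `X` is (isomorphic to) the representation `X^i` based at the source `x0`: it is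
indecomposable, one-dimensional at `x0` and at the vertices `t(β_j)`, `j ≠ i`,
zero elsewhere, with isomorphisms along all arrows `β_j`, `j ≠ i`. -/
def IsXi (x0 : Q.Src) (i : Fin r) (X : CrRep k Q) : Prop :=
  X.Indec ∧
  (∀ x : Q.Src, (∃ v : X.Vs x, v ≠ 0) ↔ x = x0) ∧
  (∀ y : Q.Snk, (∃ v : X.Vt y, v ≠ 0) ↔ ∃ j : Fin r, j ≠ i ∧ y = Q.step x0 j) ∧
  Module.finrank k (X.Vs x0) = 1 ∧
  (∀ j : Fin r, j ≠ i → Function.Bijective ⇑(X.map x0 j))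

/-- `M` is `S_r`-stable with respect to the choice `Φ` of automorphisms of `C_r` lying
over the permutations `σ ∈ S_r` of the arrows of `Γ_r`: `M ≅ σ(M)^{g_σ}` for all `σ`. -/
def SrStable (M : CrRep k Q) (Φ : ∀ σ : Equiv.Perm (Fin r), CrPermAut Q σ) : Prop :=
  ∀ σ : Equiv.Perm (Fin r), Nonempty (CrIso M (M.twist (Φ σ)))

end CrRep

/-! ## Abstract Auslander–Reiten data for `rep(C_r)` and `rep(Γ_r)` -/

/-- Abstract Auslander–Reiten-theoretic data for the representations of the universal
covering quiver `C_r` and of `Γ_r`: the AR translates, AR components, quasi-simplicity,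
quasi-length, the preprojective/preinjective classes downstairs, cones in a component,
almost split sequences and injectivity of representations of `C_r`. -/
structure CoverAR (k : Type) [Field k] {r : ℕ} (Q : CrQuiver r) where
  /-- The AR translate `τ_{C_r}` of `rep(C_r)`. -/
  tauC : Equiv.Perm (CrRep k Q)
  /-- The AR translate `τ` of `rep(Γ_r)`. -/
  tauK : Equiv.Perm (KRep k r)
  /-- Same AR component in `rep(C_r)`. -/
  sameC : CrRep k Q → CrRep k Q → Prop
  sameC_equiv : Equivalence sameC
  sameC_tau : ∀ M, sameC M (tauC M)
  /-- Same AR component in `rep(Γ_r)`. -/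
  sameK : KRep k r → KRep k r → Prop
  sameK_equiv : Equivalence sameK
  sameK_tau : ∀ M, sameK M (tauK M)
  /-- Quasi-simple in `rep(C_r)`. -/
  qsC : CrRep k Q → Prop
  /-- Quasi-simple in `rep(Γ_r)`. -/
  qsK : KRep k r → Prop
  /-- Quasi-length in `rep(C_r)`. -/
  qlC : CrRep k Q → ℕ
  /-- Preprojective representations of `Γ_r` (the component `𝒫`). -/
  Preproj : KRep k r → Prop
  /-- Preinjective representations of `Γ_r` (the component `ℐ`). -/
  Preinj : KRep k r → Prop
  /-- The cone `(X →)` of successors of `X` in its AR component. -/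
  succConeC : CrRep k Q → Set (CrRep k Q)
  /-- The cone `(→ X)` of predecessors of `X` in its AR component. -/
  predConeC : CrRep k Q → Set (CrRep k Q)
  /-- `ARSeqTriple A B C` : there is an almost split sequence `0 → A → B → C → 0`. -/
  ARSeqTriple : CrRep k Q → CrRep k Q → CrRep k Q → Prop
  /-- `M` is an injective representation of `C_r`. -/
  InjRep : CrRep k Q → Prop

namespace CoverAR

variable {k : Type} [Field k] {r : ℕ} {Q : CrQuiver r}

/-- `M ∈ rep(C_r)` is regular: its push-down `π_λ(M)` is neither preprojective nor
preinjective. -/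
def RegularC (A : CoverAR k Q) (M : CrRep k Q) : Prop :=
  ¬ A.Preproj M.pushdown ∧ ¬ A.Preinj M.pushdown

/-- `N ∈ rep(Γ_r)` is regular. -/
def RegularK (A : CoverAR k Q) (N : KRep k r) : Prop :=
  ¬ A.Preproj N ∧ ¬ A.Preinj N

/-- The regular component `𝒟` of `rep(C_r)` containing `X` has width `W_C(𝒟) = w`:
there are quasi-simple `I_𝒟`, `S_𝒟` in the component of `X` with
`(I_𝒟 →) = Inj ∩ 𝒟` (equivalently: the whole `τ⁻¹`-orbit of `I_𝒟` lies in `Inj`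
while `τ I_𝒟 ∉ Inj`), dually `(→ S_𝒟) = Sur ∩ 𝒟`, and `τ^{w+1} I_𝒟 = S_𝒟`. -/
def IsWidth (A : CoverAR k Q) (X : CrRep k Q) (w : ℕ) : Prop :=
  ∃ I S : CrRep k Q, A.qsC I ∧ A.qsC S ∧ A.sameC X I ∧ A.sameC X S ∧
    (∀ j : ℕ, ((A.tauC⁻¹ ^ j) I).AllInj) ∧ ¬ (A.tauC I).AllInj ∧
    (∀ j : ℕ, ((A.tauC ^ j) S).AllSur) ∧ ¬ (A.tauC⁻¹ S).AllSur ∧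
    (A.tauC ^ (w + 1)) I = S

/-- The regular component of `X ∈ rep(Γ_r)` has width `W(𝒞) = w`
(formulated as in `KroneckerAR.IsWidth`). -/
def IsWidthK (A : CoverAR k Q) (X : KRep k r) (w : ℕ) : Prop :=
  ∃ MC WC : KRep k r, A.qsK MC ∧ A.qsK WC ∧
    A.sameK X MC ∧ A.sameK X WC ∧
    (∀ j : ℕ, ((A.tauK⁻¹ ^ j) MC).EKP) ∧ ¬ (A.tauK MC).EKP ∧
    (∀ j : ℕ, ((A.tauK ^ j) WC).EIP) ∧ ¬ (A.tauK⁻¹ WC).EIP ∧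
    (A.tauK ^ (w + 1)) MC = WC

end CoverAR

/-!
The support of `M` is a finite set of vertices of the tree `C_r`, and `S_r`-stability makes it
invariant, together with the dimension function, under automorphisms `Φ σ` of `C_r` lying over
every `σ ∈ S_r`. These automorphisms preserve the bipartition, so they fix the centre of the
support: the midpoint `c` of a diametral geodesic, which is the only vertex of its colour within
distance `⌈D/2⌉` of the whole support. The vertices of the other colour fall into the `r` branches
of the tree at `c`, indexed by the arrow labels at `c`, and `Φ σ` carries the branch of `γ_i` onto
the branch of `γ_{σ i}` preserving dimensions. Hence all branches carry the same total dimension,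
and `r` divides the dimension of `π_λ(M)` at the vertex of `Γ_r` not covered by `c`.
-/

theorem Finset.card_dvd_sum_of_equivariant_fibers {ι β : Type*} [Fintype ι]
    (T : Finset β) (d : β → ℕ) (P : ι → β → Prop) (hP : ∀ y ∈ T, ∃! i, P i y)
    (act : Equiv.Perm ι → Equiv.Perm β) (hT : ∀ σ y, act σ y ∈ T ↔ y ∈ T)
    (hd : ∀ σ y, d (act σ y) = d y) (hact : ∀ σ i y, P i y → P (σ i) (act σ y)) :
    Fintype.card ι ∣ ∑ y ∈ T, d y := by
  classical
  set F : ι → ℕ := fun i => ∑ y ∈ T with P i y, d y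
  have hsum : ∑ y ∈ T, d y = ∑ i, F i := by
    simp only [F, Finset.sum_filter]
    rw [Finset.sum_comm]
    refine Finset.sum_congr rfl fun y hy => ?_
    obtain ⟨i, hi, huniq⟩ := hP y hy
    rw [Finset.sum_eq_single i (fun j _ hj => if_neg fun h => hj (huniq j h)) (by simp), if_pos hi]
  have hF : ∀ (σ : Equiv.Perm ι) i, F i = F (σ i) := by
    intro σ i
    refine Finset.sum_equiv (act σ) (fun y => ?_) (fun y _ => (hd σ y).symm)
    simp only [Finset.mem_filter, hT]
    refine ⟨fun ⟨hy, hi⟩ => ⟨hy, hact σ i y hi⟩, fun ⟨hy, hi⟩ => ⟨hy, ?_⟩⟩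
    obtain ⟨j, hj, -⟩ := hP y hy
    have : σ j = σ i := (hP _ ((hT σ y).mpr hy)).unique (hact σ j y hj) hi
    rwa [σ.injective this] at hj
  rcases isEmpty_or_nonempty ι with hι | ⟨⟨i₀⟩⟩
  · simp [hsum]
  · have hconst : ∀ i, F i = F i₀ := fun i => by simpa using (hF (Equiv.swap i₀ i) i₀).symm
    rw [hsum, Finset.sum_congr rfl fun i _ => hconst i, Finset.sum_const, Finset.card_univ,
      smul_eq_mul]
    exact Dvd.intro _ rfl

namespace SimpleGraph

variable {V : Type*} {G : SimpleGraph V}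

theorem Walk.dist_add_dist_of_mem_support {u v w : V} (p : G.Walk u v)
    (hp : p.length = G.dist u v) (hw : w ∈ p.support) :
    G.dist u w + G.dist w v = G.dist u v := by
  classical
  have h₁ := dist_le (p.takeUntil w hw)
  have h₂ := dist_le (p.dropUntil w hw)
  have hlen := congrArg Walk.length (p.take_spec hw)
  rw [Walk.length_append] at hlen
  have := (p.takeUntil w hw).reachable.dist_triangle_left v
  omega

theorem Walk.dist_getVert_of_length_eq_dist {u v : V} (p : G.Walk u v)
    (hp : p.length = G.dist u v) {i : ℕ} (hi : i ≤ p.length) :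
    G.dist u (p.getVert i) = i := by
  have hsum := p.dist_add_dist_of_mem_support hp (p.getVert_mem_support i)
  have h₁ := dist_le (p.take i)
  have h₂ := dist_le (p.drop i)
  simp only [Walk.take_length, Walk.drop_length] at h₁ h₂
  omega

theorem Hom.edist_le {W : Type*} {G' : SimpleGraph W} (f : G →g G') (u v : V) :
    G'.edist (f u) (f v) ≤ G.edist u v := by
  by_cases h : G.Reachable u v
  · obtain ⟨p, hp⟩ := h.exists_walk_length_eq_edist
    simpa [← hp] using SimpleGraph.edist_le (p.map f)
  · simp [edist_eq_top_of_not_reachable h]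

theorem Iso.dist_apply {W : Type*} {G' : SimpleGraph W} (f : G ≃g G') (u v : V) :
    G'.dist (f u) (f v) = G.dist u v := by
  have h : G'.edist (f u) (f v) = G.edist u v :=
    le_antisymm (Hom.edist_le f.toHom u v) (by simpa using Hom.edist_le f.symm.toHom (f u) (f v))
  simp only [dist, h]

theorem Connected.natCast_dist_eq_add (hG : G.Connected) (C : G.Coloring (ZMod 2)) (u v : V) :
    (G.dist u v : ZMod 2) = C u + C v := by
  have key : ∀ {a b : V} (p : G.Walk a b), (p.length : ZMod 2) = C a + C b := by
    intro a b p
    induction p with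
    | nil => simp [CharTwo.add_self_eq_zero]
    | @cons a c d h q ih =>
      have hne : ∀ x y : ZMod 2, x ≠ y → x + y = 1 := by decide
      have hac := hne _ _ (C.valid h)
      rw [Walk.length_cons, Nat.cast_succ, ih]
      linear_combination -hac + C c * (CharTwo.two_eq_zero : (2 : ZMod 2) = 0)
  obtain ⟨p, hp⟩ := hG.exists_walk_length_eq_dist u v
  rw [← hp, key]

theorem IsAcyclic.eq_of_isPath (hG : G.IsAcyclic) {u v : V} {p q : G.Walk u v}
    (hp : p.IsPath) (hq : q.IsPath) : p = q :=
  congrArg Subtype.val ((hG.subsingleton_path u v).elim ⟨p, hp⟩ ⟨q, hq⟩)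

theorem IsAcyclic.eq_of_length_eq_dist (hG : G.IsAcyclic) {u v : V} {p q : G.Walk u v}
    (hp : p.length = G.dist u v) (hq : q.length = G.dist u v) : p = q :=
  hG.eq_of_isPath (p.isPath_of_length_eq_dist hp) (q.isPath_of_length_eq_dist hq)

theorem IsTree.getVert_dist_eq_of_dist_add_dist (hG : G.IsTree) {u v w : V} (p : G.Walk u v)
    (hp : p.length = G.dist u v) (hw : G.dist u w + G.dist w v = G.dist u v) :
    p.getVert (G.dist u w) = w := by
  obtain ⟨q₁, hq₁⟩ := hG.connected.exists_walk_length_eq_dist u w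
  obtain ⟨q₂, hq₂⟩ := hG.connected.exists_walk_length_eq_dist w v
  have hq : (q₁.append q₂).length = G.dist u v := by rw [Walk.length_append, hq₁, hq₂, hw]
  rw [hG.isAcyclic.eq_of_length_eq_dist hp hq, ← hq₁, Walk.getVert_append]
  simp

theorem IsTree.dist_add_dist_eq_or (hG : G.IsTree) {u v w : V} (p : G.Walk u v)
    (hp : p.length = G.dist u v) (hw : w ∈ p.support) (s : V) :
    G.dist u w + G.dist w s = G.dist u s ∨ G.dist s w + G.dist w v = G.dist s v := by
  classical
  obtain ⟨q₁, hq₁⟩ := hG.connected.exists_walk_length_eq_dist u s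
  obtain ⟨q₂, hq₂⟩ := hG.connected.exists_walk_length_eq_dist s v
  have hbypass : p = (q₁.append q₂).bypass :=
    hG.isAcyclic.eq_of_isPath (p.isPath_of_length_eq_dist hp) (q₁.append q₂).bypass_isPath
  have hw' := (q₁.append q₂).support_bypass_subset_support (hbypass ▸ hw)
  rcases (Walk.mem_support_append_iff _ _).mp hw' with h | h
  · exact Or.inl (q₁.dist_add_dist_of_mem_support hq₁ h)
  · exact Or.inr (q₂.dist_add_dist_of_mem_support hq₂ h)

theorem Connected.exists_adj_dist_add_one_eq (hG : G.Connected) {u v : V} (huv : u ≠ v) :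
    ∃ w, G.Adj u w ∧ G.dist w v + 1 = G.dist u v := by
  obtain ⟨p, hp⟩ := hG.exists_walk_length_eq_dist u v
  have hlen : 0 < p.length := hp ▸ hG.pos_dist_of_ne huv
  have hadj : G.Adj u (p.getVert 1) := by simpa using p.adj_getVert_succ hlen
  refine ⟨p.getVert 1, hadj, ?_⟩
  have := p.dist_add_dist_of_mem_support hp (p.getVert_mem_support 1)
  rw [dist_eq_one_iff_adj.mpr hadj] at this
  omega

theorem IsTree.eq_of_adj_of_dist_add_one_eq (hG : G.IsTree) {u s w₁ w₂ : V}
    (h₁ : G.Adj u w₁) (h₂ : G.Adj u w₂)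
    (hd₁ : G.dist w₁ s + 1 = G.dist u s) (hd₂ : G.dist w₂ s + 1 = G.dist u s) : w₁ = w₂ := by
  obtain ⟨q₁, hq₁⟩ := hG.connected.exists_walk_length_eq_dist w₁ s
  obtain ⟨q₂, hq₂⟩ := hG.connected.exists_walk_length_eq_dist w₂ s
  have heq : q₁.cons h₁ = q₂.cons h₂ :=
    hG.isAcyclic.eq_of_length_eq_dist (by simp [hq₁, hd₁]) (by simp [hq₂, hd₂])
  simpa using congrArg (Walk.getVert · 1) heq

theorem IsTree.exists_forall_iso_apply_eq (hG : G.IsTree) (C : G.Coloring (ZMod 2))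
    {S : Finset V} (hS : S.Nonempty) :
    ∃ c, ∀ f : G ≃g G, (∀ v, C (f v) = C v) → (∀ v, f v ∈ S ↔ v ∈ S) → f c = c := by
  obtain ⟨⟨za, zb⟩, hz, hmax⟩ :=
    Finset.exists_max_image (S ×ˢ S) (fun z => G.dist z.1 z.2) (hS.product hS)
  rw [Finset.mem_product] at hz
  have hdiam : ∀ s ∈ S, ∀ t ∈ S, G.dist s t ≤ G.dist za zb :=
    fun s hs t ht => hmax (s, t) (Finset.mem_product.mpr ⟨hs, ht⟩)
  obtain ⟨p, hp⟩ := hG.connected.exists_walk_length_eq_dist za zb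
  set D := G.dist za zb
  set m := (D + 1) / 2
  set c := p.getVert m
  have hza_c : G.dist za c = m := p.dist_getVert_of_length_eq_dist hp (by omega)
  have hc : c ∈ p.support := p.getVert_mem_support m
  have hza_c_zb := p.dist_add_dist_of_mem_support hp hc
  have hecc : ∀ s ∈ S, G.dist c s ≤ m := by
    intro s hs
    have := hdiam za hz.1 s hs
    have := hdiam s hs zb hz.2
    rcases hG.dist_add_dist_eq_or p hp hc s with h | h
    · omega
    · rw [dist_comm (u := s)] at h
      omega
  refine ⟨c, fun f hfC hfS => ?_⟩
  have hfecc : ∀ s ∈ S, G.dist (f c) s ≤ m := by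
    intro s hs
    calc G.dist (f c) s = G.dist (f c) (f (f.symm s)) := by simp
      _ = G.dist c (f.symm s) := f.dist_apply _ _
      _ ≤ m := hecc _ ((hfS _).mp (by simpa using hs))
  have hpar : ∀ z, G.dist z (f c) % 2 = G.dist z c % 2 := fun z => by
    rw [← ZMod.natCast_eq_natCast_iff', hG.connected.natCast_dist_eq_add C,
      hG.connected.natCast_dist_eq_add C, hfC]
  have h₁ := hfecc za hz.1
  have h₂ := hfecc zb hz.2
  have h₃ := hpar za
  have h₄ := hpar zb
  have : D ≤ G.dist za (f c) + G.dist (f c) zb := hG.connected.dist_triangle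
  rw [dist_comm] at h₁
  rw [dist_comm (u := zb), dist_comm (u := zb)] at h₄
  have hx : G.dist za (f c) = m := by omega
  have hsum : G.dist za (f c) + G.dist (f c) zb = D := by omega
  rw [← hG.getVert_dist_eq_of_dist_add_dist p hp hsum, hx]

theorem IsTree.card_dvd_sum_of_forall_iso_apply_eq {ι : Type*} [Fintype ι]
    (hG : G.IsTree) {c : V} {nb : ι → V} (hnb : ∀ w, G.Adj c w ↔ ∃ i, nb i = w)
    (hnb_inj : Function.Injective nb) (f : Equiv.Perm ι → G ≃g G) (hfc : ∀ σ, f σ c = c)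
    (hfnb : ∀ σ i, f σ (nb i) = nb (σ i)) {T : Finset V} (hcT : c ∉ T)
    (hT : ∀ σ v, f σ v ∈ T ↔ v ∈ T) (d : V → ℕ) (hd : ∀ σ v, d (f σ v) = d v) :
    Fintype.card ι ∣ ∑ v ∈ T, d v := by
  refine Finset.card_dvd_sum_of_equivariant_fibers T d
    (fun i v => G.dist (nb i) v + 1 = G.dist c v) ?_ (fun σ => (f σ).toEquiv) hT hd ?_
  · intro v hv
    obtain ⟨w, hw, hwv⟩ :=
      hG.connected.exists_adj_dist_add_one_eq (ne_of_mem_of_not_mem hv hcT).symm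
    obtain ⟨i, rfl⟩ := (hnb w).mp hw
    exact ⟨i, hwv, fun j hj =>
      hnb_inj (hG.eq_of_adj_of_dist_add_one_eq ((hnb _).mpr ⟨j, rfl⟩) hw hj hwv)⟩
  · intro σ i v h
    have e₁ := (f σ).dist_apply (nb i) v
    have e₂ := (f σ).dist_apply c v
    rw [hfnb] at e₁
    rw [hfc] at e₂
    change G.dist (nb (σ i)) (f σ v) + 1 = G.dist c (f σ v)
    rw [e₁, e₂, h]

end SimpleGraph

theorem Module.finrank_directSum_eq_sum_of_subsingleton {k ι : Type*} [Field k] (V : ι → Type*)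
    [∀ i, AddCommGroup (V i)] [∀ i, Module k (V i)] [∀ i, FiniteDimensional k (V i)]
    (s : Finset ι) (hs : ∀ i ∉ s, Subsingleton (V i)) :
    Module.finrank k (⨁ i, V i) = ∑ i ∈ s, Module.finrank k (V i) := by
  classical
  let g : (⨁ i : s, V i) →ₗ[k] ⨁ i, V i := DirectSum.toModule k s _ fun i => DirectSum.lof k ι V i
  let g' : (⨁ i, V i) →ₗ[k] ⨁ i : s, V i := DirectSum.toModule k ι _ fun i =>
    if hi : i ∈ s then DirectSum.lof k s (fun i : s => V i) ⟨i, hi⟩ else 0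
  have hgg' : g.comp g' = LinearMap.id := by
    refine DirectSum.linearMap_ext k fun i => LinearMap.ext fun v => ?_
    by_cases hi : i ∈ s
    · simp [g, g', hi]
    · have := hs i hi
      simp [Subsingleton.elim v 0]
  have hg'g : g'.comp g = LinearMap.id :=
    DirectSum.linearMap_ext k fun i => LinearMap.ext fun v => by simp [g, g', i.2]
  rw [← (LinearEquiv.ofLinearMap g g' hgg' hg'g).finrank_eq, Module.finrank_directSum,
    ← Finset.sum_coe_sort s]

namespace BipData

variable {r : ℕ} (Q : BipData r)

def nbr : Q.Src ⊕ Q.Snk → Fin r → Q.Src ⊕ Q.Snk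
  | .inl x, i => .inr (Q.step x i)
  | .inr y, i => .inl (Q.back y i)

theorem adj_iff_exists_nbr_eq {z w : Q.Src ⊕ Q.Snk} : Q.graph.Adj z w ↔ ∃ i, Q.nbr z i = w := by
  constructor
  · rintro (⟨x, i, rfl, rfl⟩ | ⟨x, i, rfl, rfl⟩)
    · exact ⟨i, rfl⟩
    · exact ⟨i, by simp [nbr, Q.back_step]⟩
  · rintro ⟨i, rfl⟩
    cases z with
    | inl x => exact Or.inl ⟨x, i, rfl, rfl⟩
    | inr y => exact Or.inr ⟨Q.back y i, i, rfl, by simp [Q.step_back]⟩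

theorem nbr_injective (z : Q.Src ⊕ Q.Snk) : Function.Injective (Q.nbr z) := by
  cases z with
  | inl x => exact Sum.inr_injective.comp (Q.step_inj x)
  | inr y => exact Sum.inl_injective.comp (Q.back_inj y)

def coloring : Q.graph.Coloring (ZMod 2) :=
  SimpleGraph.Coloring.mk (Sum.elim 0 1) fun {z _} h => by
    obtain ⟨i, rfl⟩ := Q.adj_iff_exists_nbr_eq.mp h
    cases z <;> simp [BipData.nbr]

end BipData

namespace CrPermAut

variable {r : ℕ} {Q : CrQuiver r} {σ : Equiv.Perm (Fin r)} (φ : CrPermAut Q σ)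

@[simp]
theorem isRight_onV (z : Q.Src ⊕ Q.Snk) : (φ.onV z).isRight = z.isRight := by
  cases z <;> rfl

@[simp]
theorem isLeft_onV (z : Q.Src ⊕ Q.Snk) : (φ.onV z).isLeft = z.isLeft := by
  cases z <;> rfl

theorem onV_nbr (z : Q.Src ⊕ Q.Snk) (i : Fin r) :
    φ.onV (Q.nbr z i) = Q.nbr (φ.onV z) (σ i) := by
  cases z with
  | inl x => simp [onV, BipData.nbr, φ.comm]
  | inr y =>
    have h := φ.comm (Q.back y i) i
    rw [Q.step_back] at h
    simp [onV, BipData.nbr, ← h, Q.back_step]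

def toIso : Q.graph ≃g Q.graph where
  toEquiv := φ.onV
  map_rel_iff' {z w} := by
    simp only [BipData.adj_iff_exists_nbr_eq]
    constructor
    · rintro ⟨i, hi⟩
      exact ⟨σ.symm i, φ.onV.injective (by rw [φ.onV_nbr, σ.apply_symm_apply, hi])⟩
    · rintro ⟨i, rfl⟩
      exact ⟨σ i, (φ.onV_nbr z i).symm⟩

@[simp]
theorem toIso_apply (z : Q.Src ⊕ Q.Snk) : φ.toIso z = φ.onV z := rfl

theorem coloring_toIso (z : Q.Src ⊕ Q.Snk) : Q.coloring (φ.toIso z) = Q.coloring z := by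
  cases z <;> rfl

end CrPermAut

namespace CrRep

variable {k : Type} [Field k] {r : ℕ} {Q : CrQuiver r} (M : CrRep k Q)

theorem mem_suppSet_iff_dimAt_ne_zero (z : Q.Src ⊕ Q.Snk) : z ∈ M.suppSet ↔ M.dimAt z ≠ 0 := by
  rw [← Nat.pos_iff_ne_zero]
  cases z <;> exact Module.finrank_pos_iff_exists_ne_zero.symm

theorem dimAt_onV {σ : Equiv.Perm (Fin r)} {φ : CrPermAut Q σ} (e : CrIso M (M.twist φ))
    (z : Q.Src ⊕ Q.Snk) : M.dimAt (φ.onV z) = M.dimAt z := by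
  cases z with
  | inl x => exact (e.es x : M.Vs x ≃ₗ[k] M.Vs (φ.es x)).finrank_eq.symm
  | inr y => exact (e.et y : M.Vt y ≃ₗ[k] M.Vt (φ.et y)).finrank_eq.symm

theorem finrank_pushdown_V1 :
    Module.finrank k M.pushdown.V1 = ∑ z ∈ M.finSupp.toFinset with z.isLeft, M.dimAt z := by
  rw [← Finset.sum_preimage Sum.inl _ Sum.inl_injective.injOn _ (by simp)]
  refine Module.finrank_directSum_eq_sum_of_subsingleton _ _ fun x hx => ?_
  simp only [Finset.mem_preimage, Finset.mem_filter, Set.Finite.mem_toFinset, Sum.isLeft_inl,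
    and_true] at hx
  exact subsingleton_of_forall_eq 0 fun v => not_not.mp fun hv => hx ⟨v, hv⟩

theorem finrank_pushdown_V2 :
    Module.finrank k M.pushdown.V2 = ∑ z ∈ M.finSupp.toFinset with z.isRight, M.dimAt z := by
  rw [← Finset.sum_preimage Sum.inr _ Sum.inr_injective.injOn _ (by simp)]
  refine Module.finrank_directSum_eq_sum_of_subsingleton _ _ fun y hy => ?_
  simp only [Finset.mem_preimage, Finset.mem_filter, Set.Finite.mem_toFinset, Sum.isRight_inr,
    and_true] at hy
  exact subsingleton_of_forall_eq 0 fun v => not_not.mp fun hv => hy ⟨v, hv⟩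

end CrRep

theorem CrQuiver.dvd_sum_of_forall_onV_eq {r : ℕ} (Q : CrQuiver r)
    (Φ : ∀ σ : Equiv.Perm (Fin r), CrPermAut Q σ) {c : Q.Src ⊕ Q.Snk}
    (hc : ∀ σ, (Φ σ).onV c = c) {T : Finset (Q.Src ⊕ Q.Snk)} (hcT : c ∉ T)
    (hT : ∀ σ z, (Φ σ).onV z ∈ T ↔ z ∈ T) (d : Q.Src ⊕ Q.Snk → ℕ)
    (hd : ∀ σ z, d ((Φ σ).onV z) = d z) : r ∣ ∑ z ∈ T, d z := by
  simpa using Q.isTree.card_dvd_sum_of_forall_iso_apply_eq (fun _ => Q.adj_iff_exists_nbr_eq)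
    (Q.nbr_injective c) (fun σ => (Φ σ).toIso) hc (fun σ i => by simp [CrPermAut.onV_nbr, hc])
    hcT hT d hd

theorem statement17_general {k : Type} [Field k] {r : ℕ}
    (Q : CrQuiver r) (M : CrRep k Q)
    (Φ : ∀ σ : Equiv.Perm (Fin r), CrPermAut Q σ) (hΦ : M.SrStable Φ)
    (a b : ℕ) (hdim : M.pushdown.dimVec = (a, b)) :
    r ∣ a ∨ r ∣ b := by
  simp only [KRep.dimVec, Prod.mk.injEq] at hdim
  obtain ⟨rfl, rfl⟩ := hdim
  rw [M.finrank_pushdown_V1, M.finrank_pushdown_V2]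
  set S := M.finSupp.toFinset
  have hdimΦ : ∀ σ z, M.dimAt ((Φ σ).onV z) = M.dimAt z := fun σ => M.dimAt_onV (hΦ σ).some
  have hSΦ : ∀ σ z, (Φ σ).onV z ∈ S ↔ z ∈ S := fun σ z => by
    rw [Set.Finite.mem_toFinset, Set.Finite.mem_toFinset]
    change _ ∈ M.suppSet ↔ _ ∈ M.suppSet
    rw [M.mem_suppSet_iff_dimAt_ne_zero, M.mem_suppSet_iff_dimAt_ne_zero, hdimΦ]
  rcases S.eq_empty_or_nonempty with hS | hS
  · simp [hS]
  obtain ⟨c, hc⟩ := Q.isTree.exists_forall_iso_apply_eq Q.coloring hS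
  have hfix : ∀ σ, (Φ σ).onV c = c := fun σ => hc _ (Φ σ).coloring_toIso (hSΦ σ)
  rcases c with x | y
  · exact Or.inr (Q.dvd_sum_of_forall_onV_eq Φ hfix (by simp) (by simp [hSΦ]) _ hdimΦ)
  · exact Or.inl (Q.dvd_sum_of_forall_onV_eq Φ hfix (by simp) (by simp [hSΦ]) _ hdimΦ)

theorem statement17 {k : Type} [Field k] [IsAlgClosed k] {r : ℕ} (hr : 3 ≤ r)
    (Q : CrQuiver r) (M : CrRep k Q) (hM : M.Indec)
    (Φ : ∀ σ : Equiv.Perm (Fin r), CrPermAut Q σ) (hΦ : M.SrStable Φ)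
    (a b : ℕ) (hdim : M.pushdown.dimVec = (a, b)) :
    r ∣ a ∨ r ∣ b :=
  statement17_general Q M Φ hΦ a b hdim
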